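/- Assume L > 1, G ≥ 1, distinct unit directions α₁,…,α_G and heights 0 < h₁ < ⋯ < h_L, and assume there exists a nonempty open set B ⊂ Ω_T(h₁α_{g₀}) with ω₁ ≡ 1 on B. Then the atmospheric tomography operator A is not injective: there exist Φ ≠ Φ̃ in ⊕_l L²(Ω_l) with AΦ = AΦ̃. Explicitly, one may modify Φ₁ arbitrarily (in L²) on the translated set Ω̄^1 and compensate on Ω̄^L by Φ̃_L(r + h_L α_{g₀}) = φ_{g₀}(r) − Σ_{l=1}^{L−1} Φ̃_l(r + h_l α_{g₀}), leaving all data φ_g unchanged. -/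

import Mathlib

/-!
Perturb the lowest layer by the indicator of `B` and the highest layer by minus the indicator
of `B` translated by `(h_L - h_1) α_{g₀}`. Along direction `g₀` the two perturbations meet the
same point of `Ω_T` and cancel. Along any other direction `g` neither is seen: the lowest-layer
one because `B` lies outside `Ω_T(h_1 α_g)`, and the highest-layer one because the segment from
`r` to `r + h_L (α_g - α_{g₀})` stays in the convex disk `Ω_T`, which would put a point of `B`
inside `Ω_T(h_1 α_g)`. Since `B` is open and nonempty, the perturbation has positive measure.
-/

open MeasureTheory Metric

theorem Convex.add_smul_mem_of_le {𝕜 E : Type*} [Field 𝕜] [LinearOrder 𝕜] [IsStrictOrderedRing 𝕜]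
    [AddCommGroup E] [Module 𝕜 E] {s : Set E} (hs : Convex 𝕜 s) {x v : E} {a b : 𝕜}
    (ha : 0 ≤ a) (hab : a ≤ b) (hx : x ∈ s) (hy : x + b • v ∈ s) : x + a • v ∈ s := by
  rcases ha.eq_or_lt with rfl | ha
  · simpa using hx
  have hb : 0 < b := ha.trans_le hab
  have := hs.add_smul_mem hx hy (t := a / b) ⟨by positivity, (div_le_one hb).2 hab⟩
  rwa [smul_smul, div_mul_cancel₀ _ hb.ne'] at this

theorem Fintype.sum_pi_single_apply {ι X M : Type*} [Fintype ι] [DecidableEq ι]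
    [AddCommMonoid M] (i : ι) (f : X → M) (x : ι → X) :
    ∑ l, (Pi.single i f : ι → X → M) l (x l) = f (x i) :=
  (Fintype.sum_eq_single i fun l hl => by rw [Pi.single_eq_of_ne hl]; rfl).trans
    (by rw [Pi.single_eq_same])

theorem mem_translate_iff_of_single_overlap {ι E : Type*} [NormedAddCommGroup E]
    [NormedSpace ℝ E] {α : ι → E} {g₀ : ι} {B : Set E} {T s₁ s₂ : ℝ}
    (hB₁ : B ⊆ closedBall (s₁ • α g₀) T)
    (hB₂ : ∀ x ∈ B, ∀ g, g ≠ g₀ → x ∉ closedBall (s₁ • α g) T)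
    (hs₁ : 0 ≤ s₁) (hs : s₁ ≤ s₂) {r : E} (hr : r ∈ closedBall 0 T) (g : ι) :
    r + s₂ • α g - (s₂ - s₁) • α g₀ ∈ B ↔ r + s₁ • α g ∈ B := by
  by_cases hg : g = g₀
  · subst hg
    congr! 1
    module
  refine iff_of_false (fun hmem => hB₂ _ hmem g hg ?_) (fun hmem => hB₂ _ hmem g hg ?_)
  · have hfar : r + s₂ • (α g - α g₀) ∈ closedBall 0 T := by
      have := mem_closedBall_iff_norm.1 (hB₁ hmem)
      rw [mem_closedBall_zero_iff]
      rwa [show r + s₂ • α g - (s₂ - s₁) • α g₀ - s₁ • α g₀ = r + s₂ • (α g - α g₀) by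
        module] at this
    have hmid := (convex_closedBall (0 : E) T).add_smul_mem_of_le (sub_nonneg.2 hs)
      (sub_le_self _ hs₁) hr hfar
    rw [mem_closedBall_iff_norm, show r + s₂ • α g - (s₂ - s₁) • α g₀ - s₁ • α g =
      r + (s₂ - s₁) • (α g - α g₀) by module]
    exact mem_closedBall_zero_iff.1 hmid
  · simpa [mem_closedBall_iff_norm] using hr

theorem stmt_7 (T : ℝ) (G L : ℕ) (hL : 1 < L)
    (α : Fin G → EuclideanSpace ℝ (Fin 2))
    (h : Fin L → ℝ) (hpos : ∀ l, 0 < h l) (hmono : StrictMono h)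
    (g₀ : Fin G)
    (B : Set (EuclideanSpace ℝ (Fin 2))) (hBne : B.Nonempty) (hBopen : IsOpen B)
    (hB₁ : B ⊆ Metric.closedBall ((h ⟨0, by omega⟩) • α g₀) T)
    (hB₂ : ∀ r ∈ B, ∀ g, g ≠ g₀ → r ∉ Metric.closedBall ((h ⟨0, by omega⟩) • α g) T) :
    ∀ Φ : Fin L → EuclideanSpace ℝ (Fin 2) → ℝ,
      ∃ Φt : Fin L → EuclideanSpace ℝ (Fin 2) → ℝ,
        -- Φ and Φ̃ differ on a set of positive measure inside some Ω_l, i.e. Φ ≠ Φ̃ in ⊕ L²(Ω_l)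
        (∃ l : Fin L, 0 < volume {r ∈ ⋃ g : Fin G, Metric.closedBall ((h l) • α g) T |
          Φ l r ≠ Φt l r}) ∧
        -- but both atmospheres produce exactly the same data
        (∀ g : Fin G, ∀ r ∈ Metric.closedBall (0 : EuclideanSpace ℝ (Fin 2)) T,
          (∑ l : Fin L, Φ l (r + (h l) • α g)) = ∑ l : Fin L, Φt l (r + (h l) • α g)) := by
  intro Φ
  set lo : Fin L := ⟨0, by omega⟩
  set hi : Fin L := ⟨L - 1, by omega⟩
  have hlohi : lo < hi := Fin.mk_lt_mk.2 (by omega)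
  set c := (h hi - h lo) • α g₀
  refine ⟨Φ + Pi.single lo (B.indicator 1) - Pi.single hi (fun x => B.indicator 1 (x - c)),
    ⟨lo, ?_⟩, fun g r hr => ?_⟩
  · refine (hBopen.measure_pos volume hBne).trans_le (measure_mono fun x hx => ?_)
    exact ⟨Set.mem_iUnion.2 ⟨g₀, hB₁ hx⟩, by simp [hlohi.ne, hx]⟩
  · classical
    have hshift := mem_translate_iff_of_single_overlap hB₁ hB₂ (hpos lo).le
      (hmono hlohi).le hr g
    simp only [Pi.add_apply, Pi.sub_apply, Finset.sum_sub_distrib, Finset.sum_add_distrib]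
    rw [Fintype.sum_pi_single_apply, Fintype.sum_pi_single_apply]
    simp only [Set.indicator_apply, Pi.one_apply, c, hshift, add_sub_cancel_right]
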